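/- arXiv:1611.04197 — 3 statements merged into one kernel-verified Lean document; each statement's English description precedes it below -/
import Mathlib

section
/- Let k be a field and n ≥ 1. The k(t)[a]-module k(t)[a]/(a−t)^n, restricted along the inclusion k[a] ⊂ k(t)[a], is isomorphic as a k[a]-module to a direct sum of n copies of k(a), the field of rational functions viewed as a k[a]-module. Consequently its k[a]-endomorphism ring is isomorphic to the ring of n×n matrices over k(a), of dimension n² over k(a). -/
/-!
A nonzero `p ∈ k[a]` does not vanish at `a = t`, because `t` is transcendental over `k`, so it is
prime to `(a - t)^n` and becomes a unit in `L = k(t)[a]/(a - t)^n`. Hence the inclusion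
`k[a] → L` extends to `k(a) → L`, and evaluation at `a = t` is a retraction `L → k(t) = k(a)`
of it whose kernel is generated by `ε = a - t`. Thus `L = k(a) + εL` with `ε^n = 0 ≠ ε^(n-1)`,
so `1, ε, …, ε^(n-1)` is a `k(a)`-basis of `L`. Since `k(a)` is a localization of `k[a]`, every
`k[a]`-linear endomorphism of `k(a)^n` is `k(a)`-linear, which identifies the endomorphism ring
with `Mₙ(k(a))`.
-/

open Polynomial nonZeroDivisors

section NilpotentPowers

variable {F A : Type*} [Field F] [CommRing A] [Algebra F A] {ε : A} {n : ℕ}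

theorem mem_span_pow_of_forall_exists_dvd_sub_algebraMap
    (hres : ∀ x : A, ∃ c : F, ε ∣ x - algebraMap F A c) (hε : ε ^ n = 0) (x : A) :
    x ∈ Submodule.span F (Set.range fun i : Fin n => ε ^ (i : ℕ)) := by
  set S := Submodule.span F (Set.range fun i : Fin n => ε ^ (i : ℕ))
  have approx : ∀ m ≤ n, ∃ y, x - ε ^ m * y ∈ S := by
    intro m hm
    induction m with
    | zero => exact ⟨x, by simp [S.zero_mem]⟩
    | succ m ih =>
      obtain ⟨y, hy⟩ := ih (by omega)
      obtain ⟨c, z, hz⟩ := hres y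
      refine ⟨z, ?_⟩
      have hsplit : x - ε ^ (m + 1) * z = (x - ε ^ m * y) + c • ε ^ m := by
        rw [Algebra.smul_def]; linear_combination ε ^ m * hz
      rw [hsplit]
      exact S.add_mem hy (S.smul_mem c (Submodule.subset_span ⟨⟨m, hm⟩, rfl⟩))
  obtain ⟨y, hy⟩ := approx n le_rfl
  simpa [hε] using hy

theorem linearIndependent_pow_of_pow_pred_ne_zero (hε : ε ^ n = 0) (hε' : ε ^ (n - 1) ≠ 0) :
    LinearIndependent F (fun i : Fin n => ε ^ (i : ℕ)) := by
  rw [Fintype.linearIndependent_iff]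
  intro c hc ⟨j, hj⟩
  induction j using Nat.strong_induction_on with
  | _ j ih =>
      -- multiplying by `ε ^ (n - 1 - j)` kills every term except the `j`-th
      have hshift : ∑ i, c i • ε ^ ((i : ℕ) + (n - 1 - j)) = 0 := by
        simpa [Finset.sum_mul, smul_mul_assoc, ← pow_add] using congrArg (· * ε ^ (n - 1 - j)) hc
      rw [Finset.sum_eq_single ⟨j, hj⟩ (fun i _ hi => ?_) (by simp)] at hshift
      · rw [show j + (n - 1 - j) = n - 1 by omega] at hshift
        exact (smul_eq_zero.mp hshift).resolve_right hε'
      · have hne : (i : ℕ) ≠ j := fun h => hi (Fin.ext h)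
        rcases lt_or_gt_of_ne hne with hlt | hgt
        · rw [ih i hlt i.isLt, zero_smul]
        · have hvanish : ε ^ ((i : ℕ) + (n - 1 - j)) = 0 := pow_eq_zero_of_le (by omega) hε
          rw [hvanish, smul_zero]

noncomputable def Module.Basis.ofNilpotentPow
    (hres : ∀ x : A, ∃ c : F, ε ∣ x - algebraMap F A c) (hε : ε ^ n = 0)
    (hε' : ε ^ (n - 1) ≠ 0) : Module.Basis (Fin n) F A :=
  .mk (linearIndependent_pow_of_pow_pred_ne_zero hε hε')
    fun x _ => mem_span_pow_of_forall_exists_dvd_sub_algebraMap hres hε x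

end NilpotentPowers

def Module.End.extendScalarsOfIsLocalizationRingEquiv {R : Type*} [CommSemiring R]
    (S : Submonoid R) (A : Type*) [CommSemiring A] [Algebra R A] [IsLocalization S A]
    (M : Type*) [AddCommMonoid M] [Module R M] [Module A M] [IsScalarTower R A M] :
    Module.End R M ≃+* Module.End A M :=
  { LinearMap.extendScalarsOfIsLocalizationEquiv S A with map_mul' := fun _ _ => rfl }

theorem RatFunc.eval_X_map_algebraMap {k : Type*} [Field k] (p : k[X]) :
    (p.map (algebraMap k (RatFunc k))).eval RatFunc.X = algebraMap k[X] (RatFunc k) p := by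
  rw [eval_map_algebraMap, RatFunc.aeval_X_left_eq_algebraMap]

section

variable (k : Type*) [Field k] (n : ℕ)

/-- `k(t)[a]/(a - t)^n`, with `a = X` and `t = RatFunc.X`. A type synonym, because the quotient
already is a `k(t)`-algebra through constants, whereas here `k(a)` acts through `a ↦ a`. -/
def Jet : Type _ := (RatFunc k)[X] ⧸ (Ideal.span {(X - C RatFunc.X) ^ n} : Ideal (RatFunc k)[X])

namespace Jet

noncomputable instance : CommRing (Jet k n) :=
  inferInstanceAs (CommRing ((RatFunc k)[X] ⧸ (Ideal.span {(X - C RatFunc.X) ^ n} : Ideal _)))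

noncomputable def mk : (RatFunc k)[X] →+* Jet k n := Ideal.Quotient.mk _

theorem mk_surjective : Function.Surjective (mk k n) := Ideal.Quotient.mk_surjective

theorem mk_eq_zero_iff {f : (RatFunc k)[X]} : mk k n f = 0 ↔ (X - C RatFunc.X) ^ n ∣ f :=
  Ideal.Quotient.eq_zero_iff_mem.trans Ideal.mem_span_singleton

noncomputable instance : Algebra k[X] (Jet k n) :=
  ((mk k n).comp (mapRingHom (algebraMap k (RatFunc k)))).toAlgebra

theorem isUnit_algebraMap {p : k[X]} (hp : p ≠ 0) : IsUnit (algebraMap k[X] (Jet k n) p) := by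
  have hmax : (Ideal.span {X - C (RatFunc.X : RatFunc k)}).IsMaximal :=
    PrincipalIdealRing.isMaximal_of_irreducible (irreducible_X_sub_C _)
  have hnotMem : p.map (algebraMap k (RatFunc k)) ∉ Ideal.span {X - C RatFunc.X} := by
    rw [← ker_evalRingHom, RingHom.mem_ker, coe_evalRingHom, RatFunc.eval_X_map_algebraMap,
      map_eq_zero_iff _ (IsFractionRing.injective k[X] (RatFunc k))]
    exact hp
  have hunit := (Ideal.Quotient.isUnit_mk_pow_of_notMem (n := n) _ hnotMem).map
    (Ideal.quotEquivOfEq (Ideal.span_singleton_pow _ n))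
  rwa [Ideal.quotEquivOfEq_mk] at hunit

noncomputable instance : Algebra (RatFunc k) (Jet k n) :=
  (IsLocalization.lift (M := k[X]⁰) (S := RatFunc k) fun p =>
    isUnit_algebraMap k n (nonZeroDivisors.coe_ne_zero p)).toAlgebra

instance : IsScalarTower k[X] (RatFunc k) (Jet k n) :=
  .of_algebraMap_eq fun p => (IsLocalization.lift_eq (M := k[X]⁰) (S := RatFunc k) _ p).symm

variable {n}

noncomputable def residue (hn : n ≠ 0) : Jet k n →+* RatFunc k :=
  Ideal.Quotient.lift _ (evalRingHom RatFunc.X) fun f hf => by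
    obtain ⟨g, rfl⟩ := Ideal.mem_span_singleton'.mp hf
    simp [zero_pow hn]

theorem residue_mk (hn : n ≠ 0) (f : (RatFunc k)[X]) :
    residue k hn (mk k n f) = f.eval RatFunc.X := rfl

theorem residue_algebraMap (hn : n ≠ 0) (c : RatFunc k) :
    residue k hn (algebraMap (RatFunc k) (Jet k n) c) = c := by
  have hcomp : (residue k hn).comp (algebraMap (RatFunc k) (Jet k n)) = RingHom.id _ :=
    IsLocalization.ringHom_ext k[X]⁰ <| RingHom.ext fun p => by
      rw [RingHom.comp_apply, RingHom.comp_apply, ← IsScalarTower.algebraMap_apply]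
      exact RatFunc.eval_X_map_algebraMap p
  exact RingHom.congr_fun hcomp c

theorem exists_dvd_sub_algebraMap (hn : n ≠ 0) (x : Jet k n) :
    ∃ c : RatFunc k, mk k n (X - C RatFunc.X) ∣ x - algebraMap (RatFunc k) (Jet k n) c := by
  refine ⟨residue k hn x, ?_⟩
  obtain ⟨f, hf⟩ := mk_surjective k n (x - algebraMap (RatFunc k) (Jet k n) (residue k hn x))
  have hroot : f.IsRoot RatFunc.X := by
    rw [IsRoot, ← residue_mk k hn, hf, map_sub, residue_algebraMap, sub_self]
  rw [← hf]
  exact map_dvd _ (dvd_iff_isRoot.mpr hroot)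

theorem mk_X_sub_C_pow_eq_zero : mk k n (X - C RatFunc.X) ^ n = 0 := by
  rw [← map_pow, mk_eq_zero_iff]

theorem mk_X_sub_C_pow_pred_ne_zero (hn : n ≠ 0) : mk k n (X - C RatFunc.X) ^ (n - 1) ≠ 0 := by
  rw [← map_pow, Ne, mk_eq_zero_iff,
    pow_dvd_pow_iff (X_sub_C_ne_zero _) (irreducible_X_sub_C _).not_isUnit]
  omega

noncomputable def basis (hn : n ≠ 0) : Module.Basis (Fin n) (RatFunc k) (Jet k n) :=
  .ofNilpotentPow (exists_dvd_sub_algebraMap k hn) (mk_X_sub_C_pow_eq_zero k)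
    (mk_X_sub_C_pow_pred_ne_zero k hn)

noncomputable def linearEquivPi (hn : n ≠ 0) : Jet k n ≃ₗ[k[X]] (Fin n → RatFunc k) :=
  (basis k hn).equivFun.restrictScalars k[X]

noncomputable def endRingEquivMatrix (hn : n ≠ 0) :
    Module.End k[X] (Jet k n) ≃+* Matrix (Fin n) (Fin n) (RatFunc k) :=
  (linearEquivPi k hn).conjRingEquiv.trans <|
    (Module.End.extendScalarsOfIsLocalizationRingEquiv k[X]⁰ (RatFunc k) _).trans
      Matrix.toLinAlgEquiv'.symm.toRingEquiv

end Jet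

end

theorem stmt1 (k : Type) [Field k] (n : ℕ) (hn : 1 ≤ n)
    (I : Ideal (Polynomial (RatFunc k)))
    (hI : I = Ideal.span {(X - C RatFunc.X) ^ n}) :
    letI L := Polynomial (RatFunc k) ⧸ I
    letI φ : Polynomial k →+* Polynomial (RatFunc k) :=
      Polynomial.mapRingHom (algebraMap k (RatFunc k))
    letI : Module (Polynomial k) L := Module.compHom L φ
    Nonempty (L ≃ₗ[Polynomial k] (Fin n → RatFunc k)) ∧
    Nonempty ((Module.End (Polynomial k) L) ≃+*
        Matrix (Fin n) (Fin n) (RatFunc k)) ∧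
    Module.finrank (RatFunc k) (Matrix (Fin n) (Fin n) (RatFunc k)) = n ^ 2 := by
  subst hI
  have hn : n ≠ 0 := by omega
  exact ⟨⟨Jet.linearEquivPi k hn⟩, ⟨Jet.endRingEquivMatrix k hn⟩, by
    rw [Module.finrank_matrix, Module.finrank_self, Fintype.card_fin, mul_one, sq]⟩
end

section
/- Let C be an essentially small triangulated category and X → Y → Z → ΣX an exact triangle satisfying: (2) every morphism Z' → Z that is not a split epimorphism factors through Y → Z, and (3) the connecting morphism Z → ΣX is nonzero. Then condition (1) (every morphism X → X' that is not a split monomorphism factors through X → Y) holds if and only if (1') the endomorphism ring of X is local. -/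
/- STATEMENT 8: In a (pre)triangulated category, given a distinguished triangle
X → Y → Z → ΣX satisfying (2) every non-split-epi Z' → Z factors through Y → Z,
and (3) the connecting map Z → ΣX is nonzero, condition (1) (every non-split-mono
X → X' factors through X → Y) holds iff (1') End(X) is local. -/

open CategoryTheory CategoryTheory.Pretriangulated

/-- A nontrivial ring in which, for every `a`, either `a` or `1 - a` is left
invertible, is local. -/
theorem auxLocalOfLeftInv {R : Type*} [Ring R] [Nontrivial R]
    (H : ∀ a : R, (∃ b, b * a = 1) ∨ (∃ b, b * (1 - a) = 1)) : IsLocalRing R := by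
  have key : ∀ a b : R, b * a = 1 → IsUnit a := by
    intro a b hb
    have he : (a * b) * (a * b) = a * b := by
      rw [mul_assoc, ← mul_assoc b, hb, one_mul]
    rcases H (a * b) with ⟨c, hc⟩ | ⟨c, hc⟩
    · have hab : a * b = 1 := by
        calc a * b = (c * (a * b)) * (a * b) := by rw [hc, one_mul]
        _ = c * ((a * b) * (a * b)) := by rw [mul_assoc]
        _ = c * (a * b) := by rw [he]
        _ = 1 := hc
      exact ⟨⟨a, b, hab, hb⟩, rfl⟩
    · exfalso
      have h1e : (1 - a * b) * (1 - a * b) = 1 - a * b := by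
        have : (1 - a * b) * (1 - a * b) = 1 - a * b - a * b + (a * b) * (a * b) := by
          noncomm_ring
        rw [this, he]
        abel
      have hab : a * b = 0 := by
        have h1 : (1 : R) - a * b = 1 := by
          calc (1 : R) - a * b = (c * (1 - a * b)) * (1 - a * b) := by rw [hc, one_mul]
          _ = c * ((1 - a * b) * (1 - a * b)) := by rw [mul_assoc]
          _ = c * (1 - a * b) := by rw [h1e]
          _ = 1 := hc
        exact sub_eq_self.mp h1
      have : (1 : R) = 0 := by
        calc (1 : R) = (b * a) * (b * a) := by rw [hb, one_mul]
        _ = b * ((a * b) * a) := by rw [mul_assoc, ← mul_assoc a b a]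
        _ = 0 := by rw [hab, zero_mul, mul_zero]
      exact one_ne_zero this
  refine ⟨fun {a b} hab => ?_⟩
  have hba : b = 1 - a := eq_sub_of_add_eq' hab
  rcases H a with ⟨c, hc⟩ | ⟨c, hc⟩
  · exact Or.inl (key a c hc)
  · exact Or.inr (hba ▸ key _ c hc)

theorem stmt8 (C : Type) [Category C] [Preadditive C] [Limits.HasZeroObject C]
    [HasShift C ℤ] [∀ n : ℤ, (shiftFunctor C n).Additive] [Pretriangulated C]
    (T : Triangle C) (hT : T ∈ distTriang C)
    (h2 : ∀ (Z' : C) (g : Z' ⟶ T.obj₃), ¬ IsSplitEpi g →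
      ∃ g' : Z' ⟶ T.obj₂, g = g' ≫ T.mor₂)
    (h3 : T.mor₃ ≠ 0) :
    (∀ (X' : C) (f : T.obj₁ ⟶ X'), ¬ IsSplitMono f →
      ∃ f' : T.obj₂ ⟶ X', f = T.mor₁ ≫ f') ↔
    IsLocalRing (End T.obj₁) := by
  constructor
  · -- (1) ⇒ End(X) local
    intro h1
    have hne : (1 : End T.obj₁) ≠ 0 := by
      intro h
      apply h3
      have h0 : (𝟙 T.obj₁ : T.obj₁ ⟶ T.obj₁) = 0 := h
      calc T.mor₃ = T.mor₃ ≫ (shiftFunctor C (1 : ℤ)).map (𝟙 T.obj₁) := by simp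
      _ = 0 := by rw [h0, Functor.map_zero, Limits.comp_zero]
    haveI : Nontrivial (End T.obj₁) := ⟨⟨1, 0, hne⟩⟩
    apply auxLocalOfLeftInv
    intro a
    by_cases ha : IsSplitMono (a : T.obj₁ ⟶ T.obj₁)
    · exact Or.inl ⟨retraction (a : T.obj₁ ⟶ T.obj₁), IsSplitMono.id _⟩
    · by_cases hb : IsSplitMono ((1 - a : End T.obj₁) : T.obj₁ ⟶ T.obj₁)
      · exact Or.inr ⟨retraction ((1 - a : End T.obj₁) : T.obj₁ ⟶ T.obj₁),
          IsSplitMono.id _⟩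
      · exfalso
        obtain ⟨f', hf'⟩ := h1 _ _ ha
        obtain ⟨g', hg'⟩ := h1 _ _ hb
        have hid : (𝟙 T.obj₁ : T.obj₁ ⟶ T.obj₁) = T.mor₁ ≫ (f' + g') := by
          have hsum : (a : T.obj₁ ⟶ T.obj₁) + ((1 - a : End T.obj₁) : T.obj₁ ⟶ T.obj₁)
              = 𝟙 T.obj₁ := by
            show a + (1 - a) = (1 : End T.obj₁)
            abel
          rw [Preadditive.comp_add, ← hf', ← hg', hsum]
        apply h3
        have h31 := comp_distTriang_mor_zero₃₁ T hT
        calc T.mor₃ = T.mor₃ ≫ (shiftFunctor C (1 : ℤ)).map (𝟙 T.obj₁) := by simp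
        _ = T.mor₃ ≫ (shiftFunctor C (1 : ℤ)).map (T.mor₁ ≫ (f' + g')) := by rw [← hid]
        _ = (T.mor₃ ≫ (shiftFunctor C (1 : ℤ)).map T.mor₁) ≫
              (shiftFunctor C (1 : ℤ)).map (f' + g') := by
            rw [Functor.map_comp, Category.assoc]
        _ = 0 := by rw [h31, Limits.zero_comp]
  · -- End(X) local ⇒ (1)
    intro hL X' f hf
    obtain ⟨Y'', α'', β'', hT''⟩ :=
      distinguished_cocone_triangle₂ (T.mor₃ ≫ (shiftFunctor C (1 : ℤ)).map f)
    have key : T.mor₃ ≫ (shiftFunctor C (1 : ℤ)).map f = 0 := by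
      by_cases hepi : IsSplitEpi β''
      · have hz : β'' ≫ (T.mor₃ ≫ (shiftFunctor C (1 : ℤ)).map f) = 0 :=
          comp_distTriang_mor_zero₂₃ _ hT''
        calc T.mor₃ ≫ (shiftFunctor C (1 : ℤ)).map f
            = (section_ β'' ≫ β'') ≫ (T.mor₃ ≫ (shiftFunctor C (1 : ℤ)).map f) := by
              rw [IsSplitEpi.id, Category.id_comp]
        _ = section_ β'' ≫ (β'' ≫ (T.mor₃ ≫ (shiftFunctor C (1 : ℤ)).map f)) := by
              rw [Category.assoc]
        _ = 0 := by rw [hz, Limits.comp_zero]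
      · exfalso
        obtain ⟨t, ht⟩ := h2 _ β'' hepi
        obtain ⟨s, hs₁, hs₂⟩ := complete_distinguished_triangle_morphism₁ _ T hT'' hT
          t (𝟙 T.obj₃) (by exact (Category.comp_id β'').trans ht)
        change X' ⟶ T.obj₁ at s
        replace hs₂ : (T.mor₃ ≫ (shiftFunctor C (1 : ℤ)).map f) ≫ (shiftFunctor C (1 : ℤ)).map s
            = 𝟙 T.obj₃ ≫ T.mor₃ := hs₂
        rw [Category.id_comp] at hs₂
        have ha : T.mor₃ ≫ (shiftFunctor C (1 : ℤ)).map (f ≫ s) = T.mor₃ := by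
          rw [Functor.map_comp, ← Category.assoc]
          exact hs₂
        let a : End T.obj₁ := f ≫ s
        rcases hL.isUnit_or_isUnit_of_add_one (a := a) (b := 1 - a)
            (by abel) with hu | hu
        · apply hf
          obtain ⟨u, hu'⟩ := hu
          have hinv : (↑u⁻¹ : End T.obj₁) * a = 1 := by
            rw [← hu']; exact u.inv_mul
          have hmor : (a : T.obj₁ ⟶ T.obj₁) ≫ (↑u⁻¹ : End T.obj₁) = 𝟙 T.obj₁ := hinv
          exact ⟨⟨s ≫ (↑u⁻¹ : End T.obj₁), by rw [← Category.assoc]; exact hmor⟩⟩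
        · apply h3
          obtain ⟨u, hu'⟩ := hu
          have hinv : (↑u⁻¹ : End T.obj₁) * ((1 : End T.obj₁) - a) = 1 := by
            rw [← hu']; exact u.inv_mul
          have hmor : (((1 : End T.obj₁) - a) : T.obj₁ ⟶ T.obj₁) ≫
              (↑u⁻¹ : End T.obj₁) = 𝟙 T.obj₁ := hinv
          have hz : T.mor₃ ≫ (shiftFunctor C (1 : ℤ)).map
              (((1 : End T.obj₁) - a : End T.obj₁) : T.obj₁ ⟶ T.obj₁) = 0 := by
            have heq : (((1 : End T.obj₁) - a : End T.obj₁) : T.obj₁ ⟶ T.obj₁)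
                = 𝟙 T.obj₁ - (f ≫ s) := rfl
            rw [heq, Functor.map_sub, Preadditive.comp_sub, CategoryTheory.Functor.map_id,
              Category.comp_id, ha, sub_self]
          calc T.mor₃
              = T.mor₃ ≫ (shiftFunctor C (1 : ℤ)).map
                ((((1 : End T.obj₁) - a : End T.obj₁) : T.obj₁ ⟶ T.obj₁)
                  ≫ (↑u⁻¹ : End T.obj₁)) := by
                rw [hmor, CategoryTheory.Functor.map_id, Category.comp_id]
          _ = (T.mor₃ ≫ (shiftFunctor C (1 : ℤ)).map
                (((1 : End T.obj₁) - a : End T.obj₁) : T.obj₁ ⟶ T.obj₁))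
                ≫ (shiftFunctor C (1 : ℤ)).map (↑u⁻¹ : End T.obj₁) := by
              rw [Functor.map_comp, Category.assoc]
          _ = 0 := by rw [hz, Limits.zero_comp]
    -- conclude : f factors through T.mor₁
    have hrr := rot_of_distTriang _ (rot_of_distTriang _ hT)
    obtain ⟨g, hg⟩ := Triangle.yoneda_exact₂ _ hrr
      (show T.rotate.rotate.obj₂ ⟶ X'⟦(1 : ℤ)⟧ from (shiftFunctor C (1 : ℤ)).map f)
      (by dsimp; exact key)
    change T.obj₂⟦(1 : ℤ)⟧ ⟶ X'⟦(1 : ℤ)⟧ at g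
    replace hg : (shiftFunctor C (1 : ℤ)).map f = (-(shiftFunctor C (1 : ℤ)).map T.mor₁) ≫ g := hg
    refine ⟨(shiftFunctor C (1 : ℤ)).preimage
      (-(show T.obj₂⟦(1 : ℤ)⟧ ⟶ X'⟦(1 : ℤ)⟧ from g)), ?_⟩
    apply (shiftFunctor C (1 : ℤ)).map_injective
    rw [Functor.map_comp, Functor.map_preimage, hg, Preadditive.neg_comp,
      Preadditive.comp_neg]
end

section
/- Let R be a graded commutative local ring with maximal homogeneous ideal 𝔪, and C an essentially small R-linear Krull–Schmidt triangulated category admitting a Serre functor F, i.e. an R-linear triangle self-equivalence with natural isomorphisms Hom_R(Hom*_C(X,Y), I(𝔪)) ≅ Hom_C(Y, FX). Then C has Auslander–Reiten triangles: for every indecomposable object X there exist AR-triangles V → W → X → ΣV and X → Y → Z → ΣX. -/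
/- STATEMENT 9: Let R be a commutative (graded) local ring with maximal ideal 𝔪
and C an essentially small R-linear Krull–Schmidt triangulated category with a
Serre functor F, i.e. an R-linear triangle self-equivalence with natural
isomorphisms Hom_R(Hom_C(X,Y), I(𝔪)) ≅ Hom_C(Y, FX), where I(𝔪) is an injective
hull of R/𝔪.  Then C has Auslander–Reiten triangles: for every indecomposable X
there are AR-triangles V → W → X → ΣV and X → Y → Z → ΣX. -/

open CategoryTheory CategoryTheory.Pretriangulated Limits

set_option linter.unusedSectionVars false



section RingAux

variable {Γ : Type*} [Ring Γ] [IsLocalRing Γ]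

lemma aux_unit_mul {a b : Γ} (h : IsUnit (a * b)) : IsUnit a ∧ IsUnit b := by
  obtain ⟨u, hu⟩ := h
  have h1 : a * (b * ↑u⁻¹) = 1 := by rw [← mul_assoc, ← hu, Units.mul_inv]
  set c := b * ↑u⁻¹ with hc
  have he : (c * a) * (c * a) = c * a := by
    rw [mul_assoc c a (c * a), ← mul_assoc a c a, h1, one_mul]
  rcases IsLocalRing.isUnit_or_isUnit_of_add_one
    (a := c * a) (b := 1 - c * a) (by abel) with h2 | h2
  · have hca : c * a = 1 := h2.mul_left_cancel (by rw [he, mul_one])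
    have ha : IsUnit a := isUnit_iff_exists.2 ⟨c, h1, hca⟩
    have hcU : IsUnit c := isUnit_iff_exists.2 ⟨a, hca, h1⟩
    have hb : c * ↑u = b := by rw [hc, mul_assoc, Units.inv_mul, mul_one]
    exact ⟨ha, hb ▸ hcU.mul u.isUnit⟩
  · exfalso
    have hz : (1 - c * a) * (c * a) = 0 := by rw [sub_mul, one_mul, he, sub_self]
    have e0 : c * a = 0 := h2.mul_left_cancel (by rw [hz, mul_zero])
    have ha0 : a = 0 := by
      calc a = a * (c * a) := by rw [← mul_assoc, h1, one_mul]
        _ = 0 := by rw [e0, mul_zero]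
    rw [ha0, zero_mul] at h1
    exact zero_ne_one h1

lemma aux_nonunits_add {a b : Γ} (ha : ¬ IsUnit a) (hb : ¬ IsUnit b) : ¬ IsUnit (a + b) := by
  intro h
  obtain ⟨u, hu⟩ := h
  have h1 : (↑u⁻¹ * a) + (↑u⁻¹ * b) = 1 := by rw [← mul_add, ← hu, Units.inv_mul]
  rcases IsLocalRing.isUnit_or_isUnit_of_add_one h1 with h' | h'
  · exact ha (aux_unit_mul h').2
  · exact hb (aux_unit_mul h').2

end RingAux

lemma aux_local_of_equiv {A B : Type*} [Ring A] [Ring B] (e : A ≃+* B)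
    (h : IsLocalRing A) : IsLocalRing B := by
  haveI : Nontrivial B := ⟨⟨e 0, e 1, fun h' => zero_ne_one (e.injective h')⟩⟩
  refine ⟨fun {a b} hab => ?_⟩
  have h1 : e.symm a + e.symm b = 1 := by rw [← map_add, hab, map_one]
  rcases h.isUnit_or_isUnit_of_add_one h1 with h' | h'
  · exact Or.inl (by simpa using h'.map e)
  · exact Or.inr (by simpa using h'.map e)

section CatAux

variable {C : Type*} [Category.{0} C]

/-- conjugation ring equivalence of endomorphism rings -/
def endEquivOfIso [Preadditive C] {A B : C} (e : A ≅ B) : End A ≃+* End B where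
  toFun f := e.inv ≫ f ≫ e.hom
  invFun g := e.hom ≫ g ≫ e.inv
  left_inv f := by simp [End.mul_def]
  right_inv g := by simp [End.mul_def]
  map_mul' f g := by simp [End.mul_def]
  map_add' f g := by
    show e.inv ≫ ((f : A ⟶ A) + g) ≫ e.hom =
      (e.inv ≫ (f : A ⟶ A) ≫ e.hom) + (e.inv ≫ (g : A ⟶ A) ≫ e.hom)
    rw [Preadditive.add_comp, Preadditive.comp_add]

/-- fully faithful additive functors induce ring equivalences on endomorphism rings -/
noncomputable def endEquivOfFunctor {D : Type*} [Category.{0} D] [Preadditive C] [Preadditive D]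
    (G : C ⥤ D) [G.Full] [G.Faithful] [G.Additive] (A : C) : End A ≃+* End (G.obj A) where
  toFun f := G.map f
  invFun g := G.preimage g
  left_inv f := by simp
  right_inv g := by simp
  map_mul' f g := by simp [End.mul_def]
  map_add' f g := G.map_add

lemma aux_sm_reflect {D : Type*} [Category.{0} D] (G : C ⥤ D) [G.Full] [G.Faithful]
    {A B : C} (f : A ⟶ B) (h : IsSplitMono (G.map f)) : IsSplitMono f := by
  haveI := h
  exact IsSplitMono.mk' ⟨G.preimage (retraction (G.map f)),
    G.map_injective (by simp)⟩

end CatAux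


section BinSplit
variable {C : Type*} [Category.{0} C] [Preadditive C] [HasFiniteBiproducts C]

attribute [local instance] hasBinaryBiproducts_of_finite_biproducts

noncomputable def binSplit {n : ℕ} (Z : Fin (n+1) → C) :
    (⨁ Z) ≅ Z 0 ⊞ (⨁ fun j : Fin n => Z j.succ) where
  hom := biprod.lift (biproduct.π Z 0) (biproduct.lift fun j => biproduct.π Z j.succ)
  inv := biprod.desc (biproduct.ι Z 0) (biproduct.desc fun j => biproduct.ι Z j.succ)
  hom_inv_id := by
    rw [biprod.lift_desc, biproduct.lift_desc, ← biproduct.total, Fin.sum_univ_succ]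
  inv_hom_id := by
    ext j
    all_goals
      simp [biproduct.ι_π, Fin.succ_ne_zero, fun j : Fin n => (Fin.succ_ne_zero j).symm,
        Fin.succ_injective]

lemma aux_indec_local {X : C} (h1 : ¬ IsZero X)
    (h2 : ∀ Y Z : C, (X ≅ Y ⊞ Z) → IsZero Y ∨ IsZero Z) :
    ∀ (n : ℕ) (Z : Fin n → C), (∀ i, IsLocalRing (End (Z i))) → (X ≅ ⨁ Z) →
      IsLocalRing (End X) := by
  intro n
  induction n with
  | zero =>
    intro Z _ e
    exact absurd (IsZero.of_iso (by
      rw [IsZero.iff_id_eq_zero, ← biproduct.total]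
      simp) e) h1
  | succ n ih =>
    intro Z hZ e
    rcases h2 _ _ (e ≪≫ binSplit Z) with hz | hz
    · exact ih _ (fun j => hZ j.succ) (e ≪≫ binSplit Z ≪≫ (isoZeroBiprod hz).symm)
    · exact aux_local_of_equiv (endEquivOfIso (e ≪≫ binSplit Z ≪≫ (isoBiprodZero hz).symm).symm)
        (hZ 0)

end BinSplit


section Func

variable {C : Type} [Category.{0} C]

/-- identity repackaging of an endomorphism as an element of the endomorphism monoid -/
def toEnd {P : C} (a : P ⟶ P) : End P := a

lemma toEnd_mul {P : C} (a b : P ⟶ P) : toEnd (a ≫ b) = toEnd b * toEnd a := rfl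

lemma toEnd_one {P : C} : toEnd (𝟙 P) = 1 := rfl

end Func

section Func2

variable (R : Type) [CommRing R] [IsLocalRing R]
  (I : Type) [AddCommGroup I] [Module R I]
  {C : Type} [Category.{0} C] [Preadditive C] [Linear R C]

lemma aux_smul_unit {P : C} [IsLocalRing (End P)] (r : R) (a : P ⟶ P)
    (h : IsUnit (toEnd (r • a))) : IsUnit (toEnd a) := by
  have hmul : toEnd (r • a) = toEnd (r • 𝟙 P) * toEnd a := by
    rw [← toEnd_mul]
    show toEnd (r • a) = toEnd (a ≫ (r • 𝟙 P))
    rw [Linear.comp_smul, Category.comp_id]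
  rw [hmul] at h
  exact (aux_unit_mul h).2

lemma aux_functional (hinj : Module.Injective R I)
    (ι : IsLocalRing.ResidueField R →ₗ[R] I) (hι : Function.Injective ι)
    (P : C) (hP : IsLocalRing (End P)) :
    ∃ φ : (P ⟶ P) →ₗ[R] I, φ (𝟙 P) ≠ 0 ∧ ∀ a : P ⟶ P, ¬ IsUnit (toEnd a) → φ a = 0 := by
  classical
  haveI := hP
  -- the submodule of nonunits
  obtain ⟨N, hNmem⟩ : ∃ N : Submodule R (P ⟶ P), ∀ a : P ⟶ P,
      (a ∈ N ↔ ¬ IsUnit (toEnd a)) := by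
    refine ⟨{ carrier := {a : P ⟶ P | ¬ IsUnit (toEnd a)}
              add_mem' := fun {a b} ha hb => aux_nonunits_add ha hb
              zero_mem' := ?_
              smul_mem' := fun r a ha h => ha (aux_smul_unit R r a h) }, fun a => Iff.rfl⟩
    · intro h
      obtain ⟨u, hu⟩ := h
      -- toEnd 0 = 0, a unit equal to zero gives 1 = 0
      have h1 : (1 : End P) = 0 := by
        calc (1 : End P) = ↑u⁻¹ * ↑u := (Units.inv_mul u).symm
        _ = ↑u⁻¹ * (0 : End P) := by rw [hu]; rfl
        _ = 0 := mul_zero _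
      exact one_ne_zero h1
  set q := N.mkQ with hq
  set m := q (𝟙 P) with hm
  have hm0 : m ≠ 0 := by
    intro h
    have h2 : (𝟙 P) ∈ N := (Submodule.Quotient.mk_eq_zero N).1 h
    exact ((hNmem (𝟙 P)).1 h2) (by rw [toEnd_one]; exact isUnit_one)
  set g := LinearMap.toSpanSingleton R _ m with hg
  have hkerg : ∀ r : R, g r = 0 → r ∈ IsLocalRing.maximalIdeal R := by
    intro r hr
    by_contra hrm
    have hru : IsUnit r := by
      rwa [IsLocalRing.mem_maximalIdeal, mem_nonunits_iff, not_not] at hrm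
    obtain ⟨u, rfl⟩ := hru
    rw [hg, LinearMap.toSpanSingleton_apply] at hr
    apply hm0
    calc m = (↑u⁻¹ * ↑u : R) • m := by rw [Units.inv_mul, one_smul]
    _ = (↑u⁻¹ : R) • ((↑u : R) • m) := by rw [mul_smul]
    _ = 0 := by rw [hr, smul_zero]
  set g' : R →ₗ[R] I := ι ∘ₗ (Algebra.linearMap R (IsLocalRing.ResidueField R)) with hg'
  have hg'1 : g' 1 ≠ 0 := by
    intro h
    rw [hg', LinearMap.comp_apply, Algebra.linearMap_apply, map_one] at h
    have h2 : (1 : IsLocalRing.ResidueField R) = 0 := hι (h.trans (map_zero ι).symm)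
    exact one_ne_zero h2
  have hkerg' : ∀ r : R, r ∈ IsLocalRing.maximalIdeal R → g' r = 0 := by
    intro r hr
    have h1 : (algebraMap R (IsLocalRing.ResidueField R)) r = 0 := by
      rw [IsLocalRing.ResidueField.algebraMap_eq, IsLocalRing.residue_eq_zero_iff]
      exact hr
    rw [hg', LinearMap.comp_apply, Algebra.linearMap_apply, h1, map_zero]
  have hker_le : LinearMap.ker g ≤ LinearMap.ker g' := by
    intro r hr
    exact LinearMap.mem_ker.2 (hkerg' r (hkerg r (LinearMap.mem_ker.1 hr)))
  set e₁ := LinearMap.quotKerEquivRange g with he₁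
  set ξ : LinearMap.range g →ₗ[R] I :=
    ((LinearMap.ker g).liftQ g' hker_le) ∘ₗ (e₁.symm : _ ≃ₗ[R] _).toLinearMap with hξ
  have hξ_apply : ∀ r : R, ξ ⟨g r, LinearMap.mem_range_self g r⟩ = g' r := by
    intro r
    have h1 : e₁ (Submodule.Quotient.mk r) = ⟨g r, LinearMap.mem_range_self g r⟩ := by
      apply Subtype.ext
      exact LinearMap.quotKerEquivRange_apply_mk g r
    rw [hξ, LinearMap.comp_apply]
    have h2 : (e₁.symm : _ ≃ₗ[R] _).toLinearMap ⟨g r, LinearMap.mem_range_self g r⟩ =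
        Submodule.Quotient.mk r := by
      rw [← h1]
      exact e₁.symm_apply_apply _
    rw [h2]
    exact Submodule.liftQ_apply _ _ _
  obtain ⟨φ₀, hφ₀⟩ := hinj.out (LinearMap.range g).subtype
    (Submodule.injective_subtype _) ξ
  refine ⟨φ₀ ∘ₗ N.mkQ, ?_, ?_⟩
  · intro h
    rw [LinearMap.comp_apply] at h
    have hgm : g 1 = m := by rw [hg, LinearMap.toSpanSingleton_apply, one_smul]
    have h1 : φ₀ ((LinearMap.range g).subtype ⟨g 1, LinearMap.mem_range_self g 1⟩) =
        ξ ⟨g 1, LinearMap.mem_range_self g 1⟩ := hφ₀ _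
    rw [hξ_apply 1] at h1
    apply hg'1
    rw [← h1]
    show φ₀ (g 1) = 0
    rw [hgm]
    exact h
  · intro a ha
    have h1 : N.mkQ a = 0 := (Submodule.Quotient.mk_eq_zero N).2 ((hNmem a).2 ha)
    rw [LinearMap.comp_apply, h1, map_zero]

end Func2


section Key

variable (R : Type) [CommRing R] [IsLocalRing R]
  (I : Type) [AddCommGroup I] [Module R I]
  {C : Type} [Category.{0} C] [Preadditive C] [HasZeroObject C]
  [HasShift C ℤ] [∀ n : ℤ, (shiftFunctor C n).Additive] [Pretriangulated C]
  [Linear R C]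

set_option maxHeartbeats 1000000 in
lemma key (hinj : Module.Injective R I)
    (ι : IsLocalRing.ResidueField R →ₗ[R] I) (hι : Function.Injective ι)
    (F : C ⥤ C) [F.IsEquivalence]
    (η : ∀ X Y : C, ((X ⟶ Y) →ₗ[R] I) ≃ₗ[R] (Y ⟶ F.obj X))
    (hηX : ∀ (X X' Y : C) (f : X ⟶ X') (φ : (X ⟶ Y) →ₗ[R] I),
      η X' Y (φ.comp (Linear.leftComp R Y f)) = η X Y φ ≫ F.map f)
    (hηY : ∀ (X Y Y' : C) (g : Y' ⟶ Y) (φ : (X ⟶ Y) →ₗ[R] I),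
      η X Y' (φ.comp (Linear.rightComp R X g)) = g ≫ η X Y φ)
    (P : C) (hP : IsLocalRing (End P)) :
    ∃ (W : C) (α : ((F.obj P)⟦(-1:ℤ)⟧) ⟶ W) (β : W ⟶ P)
      (γ : P ⟶ (((F.obj P)⟦(-1:ℤ)⟧)⟦(1:ℤ)⟧)),
      (Triangle.mk α β γ ∈ distTriang C) ∧ γ ≠ 0 ∧
      (∀ (V' : C) (f : ((F.obj P)⟦(-1:ℤ)⟧) ⟶ V'), ¬ IsSplitMono f → ∃ f', f = α ≫ f') ∧
      (∀ (X' : C) (g : X' ⟶ P), ¬ IsSplitEpi g → ∃ g', g = g' ≫ β) := by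
  classical
  haveI := hP
  obtain ⟨φ, hφ1, hφN⟩ := aux_functional R I hinj ι hι P hP
  set γt : P ⟶ F.obj P := η P P φ with hγt
  have hγt0 : γt ≠ 0 := by
    intro h
    apply hφ1
    have h2 : φ = 0 := by
      apply (η P P).injective
      rw [← hγt, h, map_zero]
    rw [h2]
    rfl
  -- epi-side vanishing
  have hepi : ∀ (P' : C) (g₀ : P' ⟶ P), ¬ IsSplitEpi g₀ → g₀ ≫ γt = 0 := by
    intro P' g₀ hg₀
    rw [hγt, ← hηY P P P' g₀ φ]
    have h2 : φ.comp (Linear.rightComp R P g₀) = 0 := by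
      apply LinearMap.ext
      intro h
      simp only [LinearMap.comp_apply, Linear.rightComp_apply, LinearMap.zero_apply]
      apply hφN
      intro hu
      obtain ⟨w, hw1, hw2⟩ := isUnit_iff_exists.1 hu
      exact hg₀ (IsSplitEpi.mk' ⟨w ≫ h, by rw [Category.assoc]; exact hw1⟩)
    rw [h2, map_zero]
  -- mono-side vanishing
  have hmono : ∀ (B : C) (mm : F.obj P ⟶ B), ¬ IsSplitMono mm → γt ≫ mm = 0 := by
    intro B mm hmm
    set ε : F.obj (F.asEquivalence.inverse.obj B) ≅ B := F.asEquivalence.counitIso.app B with hε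
    set gg := F.preimage (mm ≫ ε.inv) with hgg
    have hFg : F.map gg = mm ≫ ε.inv := F.map_preimage _
    have hmmeq : mm = F.map gg ≫ ε.hom := by rw [hFg]; simp
    have hz : φ.comp (Linear.leftComp R P gg) = 0 := by
      apply LinearMap.ext
      intro h
      simp only [LinearMap.comp_apply, Linear.leftComp_apply, LinearMap.zero_apply]
      apply hφN
      intro hu
      obtain ⟨w, hw1, hw2⟩ := isUnit_iff_exists.1 hu
      have hsm : IsSplitMono gg :=
        IsSplitMono.mk' ⟨h ≫ w, by rw [← Category.assoc]; exact hw2⟩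
      apply hmm
      rw [hmmeq]
      infer_instance
    have h1 : γt ≫ F.map gg = 0 := by
      rw [hγt, ← hηX P _ P gg φ, hz, map_zero]
    rw [hmmeq, ← Category.assoc, h1, zero_comp]
  -- construct the triangle
  set e := shiftNegShift (F.obj P) (1:ℤ) with he
  set γ : P ⟶ (((F.obj P)⟦(-1:ℤ)⟧)⟦(1:ℤ)⟧) := γt ≫ e.inv with hγdef
  obtain ⟨W, α, β, hT⟩ := Pretriangulated.distinguished_cocone_triangle₂ γ
  refine ⟨W, α, β, γ, hT, ?_, ?_, ?_⟩
  · intro h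
    apply hγt0
    have h2 : (γt ≫ e.inv) ≫ e.hom = 0 ≫ e.hom := by rw [← hγdef, h]
    simpa using h2
  · -- mono condition
    intro V' f hf
    set T := Triangle.mk α β γ with hTdef
    set u := (shiftFunctorCompIsoId C (1:ℤ) (-1:ℤ) (by norm_num)).hom.app ((F.obj P)⟦(-1:ℤ)⟧) with hu
    set k := (e.inv⟦(-1:ℤ)⟧' ≫ u) ≫ f with hk
    set ψ := shiftShiftNeg V' (1:ℤ) with hψ
    set mm := (shiftFunctor C (-1:ℤ)).preimage (k ≫ ψ.inv) with hmm
    have hmmap : (shiftFunctor C (-1:ℤ)).map mm = k ≫ ψ.inv :=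
      (shiftFunctor C (-1:ℤ)).map_preimage _
    have hne : ¬ IsSplitMono mm := by
      intro h1
      apply hf
      haveI := h1
      have h2 : IsSplitMono (k ≫ ψ.inv) := by
        rw [← hmmap]
        infer_instance
      haveI := h2
      have h3 : IsSplitMono k := by
        have h4 : k = (k ≫ ψ.inv) ≫ ψ.hom := by simp
        rw [h4]
        infer_instance
      haveI := h3
      have h5 : f = inv (e.inv⟦(-1:ℤ)⟧' ≫ u) ≫ k := by
        rw [hk, IsIso.inv_hom_id_assoc]
      rw [h5]
      infer_instance
    have hγk : γ⟦(-1:ℤ)⟧' ≫ (u ≫ f) = 0 := by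
      have e1 : γ⟦(-1:ℤ)⟧' ≫ (u ≫ f) = γt⟦(-1:ℤ)⟧' ≫ k := by
        rw [hγdef, Functor.map_comp, hk]
        simp only [Category.assoc]
      have e2 : k = (shiftFunctor C (-1:ℤ)).map mm ≫ ψ.hom := by
        rw [hmmap]
        simp
      rw [e1, e2, ← Category.assoc, ← Functor.map_comp, hmono _ mm hne,
        Functor.map_zero, zero_comp]
    have hvan : T.invRotate.mor₁ ≫ f = 0 := by
      have h6 : T.invRotate.mor₁ ≫ f = -(γ⟦(-1:ℤ)⟧' ≫ (u ≫ f)) := by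
        dsimp [Triangle.invRotate, hTdef]
        exact (Preadditive.neg_comp _ _).trans (congrArg Neg.neg (Category.assoc _ _ _))
      rw [h6, hγk, neg_zero]
      rfl
    obtain ⟨g', hg'⟩ := Triangle.yoneda_exact₂ T.invRotate
      (inv_rot_of_distTriang T hT) f hvan
    exact ⟨g', hg'⟩
  · -- epi condition
    intro X' g₀ hg₀
    have h0 : g₀ ≫ γ = 0 := by
      rw [hγdef, ← Category.assoc, hepi X' g₀ hg₀, zero_comp]
    exact Triangle.coyoneda_exact₃ _ hT g₀ h0

end Key


theorem stmt9 (R : Type) [CommRing R] [IsLocalRing R]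
    -- I(𝔪), an injective hull of the residue field R/𝔪
    (I : Type) [AddCommGroup I] [Module R I]
    (hinj : Module.Injective R I)
    (hhull : ∃ ι : IsLocalRing.ResidueField R →ₗ[R] I, Function.Injective ι ∧
      ∀ N : Submodule R I, N ≠ ⊥ → N ⊓ LinearMap.range ι ≠ ⊥)
    -- C, an essentially small R-linear triangulated Krull–Schmidt category
    (C : Type) [Category.{0} C] [Preadditive C] [HasZeroObject C]
    [HasShift C ℤ] [∀ n : ℤ, (shiftFunctor C n).Additive] [Pretriangulated C]
    [Linear R C] [HasFiniteBiproducts C] [EssentiallySmall.{0} C]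
    (hKS : ∀ X : C, ∃ (n : ℕ) (Z : Fin n → C),
      (∀ i, IsLocalRing (End (Z i))) ∧ Nonempty (X ≅ ⨁ Z))
    -- the Serre functor: an R-linear self-equivalence F ...
    (F : C ⥤ C) [F.IsEquivalence] [F.Additive] [F.Linear R]
    -- ... with a natural isomorphism Hom_R(Hom_C(X,Y), I(𝔪)) ≅ Hom_C(Y, FX)
    (η : ∀ X Y : C, ((X ⟶ Y) →ₗ[R] I) ≃ₗ[R] (Y ⟶ F.obj X))
    (hηX : ∀ (X X' Y : C) (f : X ⟶ X') (φ : (X ⟶ Y) →ₗ[R] I),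
      η X' Y (φ.comp (Linear.leftComp R Y f)) = η X Y φ ≫ F.map f)
    (hηY : ∀ (X Y Y' : C) (g : Y' ⟶ Y) (φ : (X ⟶ Y) →ₗ[R] I),
      η X Y' (φ.comp (Linear.rightComp R X g)) = g ≫ η X Y φ) :
    -- then C has AR-triangles
    ∀ X : C, (¬ IsZero X ∧ ∀ (Y Z : C), (X ≅ Y ⊞ Z) → IsZero Y ∨ IsZero Z) →
      (∃ (V W : C) (α : V ⟶ W) (β : W ⟶ X) (γ : X ⟶ (V⟦(1:ℤ)⟧)),
        (Triangle.mk α β γ ∈ distTriang C) ∧ γ ≠ 0 ∧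
        (∀ (V' : C) (f : V ⟶ V'), ¬ IsSplitMono f → ∃ f', f = α ≫ f') ∧
        (∀ (X' : C) (g : X' ⟶ X), ¬ IsSplitEpi g → ∃ g', g = g' ≫ β)) ∧
      (∃ (Y Z : C) (α : X ⟶ Y) (β : Y ⟶ Z) (γ : Z ⟶ (X⟦(1:ℤ)⟧)),
        (Triangle.mk α β γ ∈ distTriang C) ∧ γ ≠ 0 ∧
        (∀ (X' : C) (f : X ⟶ X'), ¬ IsSplitMono f → ∃ f', f = α ≫ f') ∧
        (∀ (Z' : C) (g : Z' ⟶ Z), ¬ IsSplitEpi g → ∃ g', g = g' ≫ β)) := by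
  obtain ⟨ι, hι, -⟩ := hhull
  intro X hX
  obtain ⟨hX1, hX2⟩ := hX
  have hlocX : IsLocalRing (End X) := by
    obtain ⟨n, Z, hZ, ⟨e⟩⟩ := hKS X
    exact aux_indec_local hX1 hX2 n Z hZ e
  constructor
  · -- AR-triangle ending at X
    obtain ⟨W, α, β, γ, hT, hγ0, hMono, hEpi⟩ :=
      key R I hinj ι hι F η hηX hηY X hlocX
    exact ⟨(F.obj X)⟦(-1:ℤ)⟧, W, α, β, γ, hT, hγ0, hMono, hEpi⟩
  · -- AR-triangle starting at X
    set P := F.inv.obj (X⟦(1:ℤ)⟧) with hP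
    have hlocP : IsLocalRing (End P) := by
      have c1 : End X ≃+* End (X⟦(1:ℤ)⟧) := endEquivOfFunctor (shiftFunctor C (1:ℤ)) X
      have eq1 : End P ≃+* End (F.obj P) := endEquivOfFunctor F P
      have eq2 : End (F.obj P) ≃+* End (X⟦(1:ℤ)⟧) :=
        endEquivOfIso (F.asEquivalence.counitIso.app (X⟦(1:ℤ)⟧))
      exact aux_local_of_equiv (c1.trans (eq1.trans eq2).symm) hlocX
    obtain ⟨W, α, β, γ, hT, hγ0, hMono, hEpi⟩ :=
      key R I hinj ι hι F η hηX hηY P hlocP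
    set ee : ((F.obj P)⟦(-1:ℤ)⟧) ≅ X :=
      (shiftFunctor C (-1:ℤ)).mapIso (F.asEquivalence.counitIso.app (X⟦(1:ℤ)⟧)) ≪≫
        shiftShiftNeg X 1 with hee
    refine ⟨W, P, ee.inv ≫ α, β, γ ≫ (shiftFunctor C (1:ℤ)).map ee.hom, ?_, ?_, ?_, ?_⟩
    · refine isomorphic_distinguished _ hT _ ?_
      refine Triangle.isoMk _ _ ee.symm (Iso.refl W) (Iso.refl P) ?_ ?_ ?_
      · dsimp
        simp
        exact Category.comp_id _
      · dsimp
        simp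
        exact (Category.comp_id _).trans (Category.id_comp _).symm
      · dsimp
        simp [← Functor.map_comp]
        have h7 : γ ≫ (shiftFunctor C (1:ℤ)).map ee.hom ≫ (shiftFunctor C (1:ℤ)).map ee.inv = γ := by
          rw [← Functor.map_comp, Iso.hom_inv_id, CategoryTheory.Functor.map_id, Category.comp_id]
        exact ((Category.assoc _ _ _).trans h7).trans (Category.id_comp γ).symm
    · intro h
      apply hγ0
      have h2 : γ = (γ ≫ (shiftFunctor C (1:ℤ)).map ee.hom) ≫
          (shiftFunctor C (1:ℤ)).map ee.inv := by
        simp [← Functor.map_comp]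
      rw [h, zero_comp] at h2
      exact h2
    · intro X' f hf
      have hf2 : ¬ IsSplitMono (ee.hom ≫ f) := by
        intro h
        apply hf
        have h3 : f = ee.inv ≫ (ee.hom ≫ f) := by simp
        rw [h3]
        haveI := h
        infer_instance
      obtain ⟨f', hf'⟩ := hMono X' (ee.hom ≫ f) hf2
      refine ⟨f', ?_⟩
      have h4 : f = ee.inv ≫ (ee.hom ≫ f) := by simp
      rw [h4, hf', ← Category.assoc]
    · intro Z' g₀ hg₀
      exact hEpi Z' g₀ hg₀
end
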